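/- Let M, K be nonsingular real m×m matrices, β > 0. The eigenvalue 1 of P^{-1}A (with A, P as defined) has geometric multiplicity at least 2m: the set of vectors { ((1/(2β))(z + M^{-1}Ky); y; z) : y, z ∈ ℂ^m } is a 2m-dimensional subspace of ker(P^{-1}A − I). -/
import Mathlib


open Matrix

/-- A 3×3 block matrix with square m×m blocks. -/
def blk3 {R : Type*} (m : ℕ)
    (A B C D E F G H I : Matrix (Fin m) (Fin m) R) :
    Matrix (Fin m ⊕ (Fin m ⊕ Fin m)) (Fin m ⊕ (Fin m ⊕ Fin m)) R :=
  Matrix.of <|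
    Sum.elim (fun i => Sum.elim (A i) (Sum.elim (B i) (C i)))
      (Sum.elim (fun i => Sum.elim (D i) (Sum.elim (E i) (F i)))
        (fun i => Sum.elim (G i) (Sum.elim (H i) (I i))))

/-- A block vector with three m-blocks. -/
def vec3 {R : Type*} {m : ℕ} (x y z : Fin m → R) : Fin m ⊕ (Fin m ⊕ Fin m) → R :=
  Sum.elim x (Sum.elim y z)

lemma blk3_mulVec {R : Type*} [CommRing R] {m : ℕ}
    (A B C D E F G H I : Matrix (Fin m) (Fin m) R) (x y z : Fin m → R) :
    blk3 m A B C D E F G H I *ᵥ vec3 x y z =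
      vec3 (A *ᵥ x + B *ᵥ y + C *ᵥ z) (D *ᵥ x + E *ᵥ y + F *ᵥ z)
        (G *ᵥ x + H *ᵥ y + I *ᵥ z) := by
  funext w
  rcases w with i | i | i <;>
    simp [blk3, vec3, mulVec, dotProduct, Fintype.sum_sum_type, Finset.sum_add_distrib,
      add_assoc]

lemma blk3_mul {R : Type*} [CommRing R] {m : ℕ}
    (A B C D E F G H I A' B' C' D' E' F' G' H' I' : Matrix (Fin m) (Fin m) R) :
    blk3 m A B C D E F G H I * blk3 m A' B' C' D' E' F' G' H' I' =
      blk3 m (A*A'+B*D'+C*G') (A*B'+B*E'+C*H') (A*C'+B*F'+C*I')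
        (D*A'+E*D'+F*G') (D*B'+E*E'+F*H') (D*C'+E*F'+F*I')
        (G*A'+H*D'+I*G') (G*B'+H*E'+I*H') (G*C'+H*F'+I*I') := by
  ext w v
  rcases w with i | i | i <;> rcases v with j | j | j <;>
    simp [blk3, Matrix.mul_apply, Fintype.sum_sum_type, Finset.sum_add_distrib, add_assoc]

lemma vec3_add {R : Type*} [AddCommMonoid R] {m : ℕ} (x y z x' y' z' : Fin m → R) :
    vec3 (x + x') (y + y') (z + z') = vec3 x y z + vec3 x' y' z' := by
  funext w; rcases w with i | i | i <;> simp [vec3]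

lemma vec3_smul {R : Type*} [CommRing R] {m : ℕ} (c : R) (x y z : Fin m → R) :
    vec3 (c • x) (c • y) (c • z) = c • vec3 x y z := by
  funext w; rcases w with i | i | i <;> simp [vec3]

lemma blk3_one {m : ℕ} :
    blk3 m (1 : Matrix (Fin m) (Fin m) ℂ) 0 0 0 1 0 0 0 1 = 1 := by
  ext w v
  rcases w with i | i | i <;> rcases v with j | j | j <;>
    simp [blk3, Matrix.one_apply]

theorem stmt_12 {m : ℕ} (M K : Matrix (Fin m) (Fin m) ℝ)
    (hM : IsUnit M) (hK : IsUnit K) (β : ℝ) (hβ : 0 < β)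
    (Mc : Matrix (Fin m) (Fin m) ℂ) (hMc : Mc = M.map Complex.ofReal)
    (Kc : Matrix (Fin m) (Fin m) ℂ) (hKc : Kc = K.map Complex.ofReal)
    (A P : Matrix (Fin m ⊕ (Fin m ⊕ Fin m)) (Fin m ⊕ (Fin m ⊕ Fin m)) ℂ)
    (hA : A = blk3 m ((2 * (β : ℂ)) • Mc) 0 (-Mc) 0 Mc Kcᵀ (-Mc) Kc 0)
    (hP : P = blk3 m 0 Kc 0 0 Mc Kcᵀ (-Mc) Kc 0) :
    ∃ V : Submodule ℂ (Fin m ⊕ (Fin m ⊕ Fin m) → ℂ),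
      (V : Set (Fin m ⊕ (Fin m ⊕ Fin m) → ℂ)) =
        {w | ∃ y z : Fin m → ℂ,
          w = vec3 ((1 / (2 * (β : ℂ))) • (z + Mc⁻¹ *ᵥ (Kc *ᵥ y))) y z} ∧
      Module.finrank ℂ V = 2 * m ∧
      ∀ w ∈ V, (P⁻¹ * A) *ᵥ w = w := by
  -- units
  have hMcU : IsUnit Mc := by
    rw [hMc]; exact hM.map Complex.ofRealHom.mapMatrix
  have hKcU : IsUnit Kc := by
    rw [hKc]; exact hK.map Complex.ofRealHom.mapMatrix
  have hMd : IsUnit Mc.det := (Matrix.isUnit_iff_isUnit_det Mc).mp hMcU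
  have hKd : IsUnit Kc.det := (Matrix.isUnit_iff_isUnit_det Kc).mp hKcU
  have hKtd : IsUnit Kcᵀ.det := by rwa [Matrix.det_transpose]
  have hMi : Mc⁻¹ * Mc = 1 := Matrix.nonsing_inv_mul Mc hMd
  have hMi' : Mc * Mc⁻¹ = 1 := Matrix.mul_nonsing_inv Mc hMd
  have hKi : Kc⁻¹ * Kc = 1 := Matrix.nonsing_inv_mul Kc hKd
  have hKti : Kcᵀ⁻¹ * Kcᵀ = 1 := Matrix.nonsing_inv_mul Kcᵀ hKtd
  have hb : (2 * (β : ℂ)) ≠ 0 := by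
    simp [Complex.ofReal_ne_zero, ne_of_gt hβ]
  -- inverse of P
  set Q : Matrix (Fin m ⊕ (Fin m ⊕ Fin m)) (Fin m ⊕ (Fin m ⊕ Fin m)) ℂ :=
    blk3 m Mc⁻¹ 0 (-Mc⁻¹) Kc⁻¹ 0 0 (-(Kcᵀ⁻¹ * Mc * Kc⁻¹)) Kcᵀ⁻¹ 0 with hQ
  have hQP : Q * P = 1 := by
    rw [hQ, hP, blk3_mul, ← blk3_one]
    congr 1 <;>
      simp [Matrix.neg_mul, Matrix.mul_neg, Matrix.mul_assoc, hMi, hKi, hKti]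
  have hPinv : P⁻¹ = Q := Matrix.inv_eq_left_inv hQP
  -- the linear map
  let f : ((Fin m → ℂ) × (Fin m → ℂ)) →ₗ[ℂ] (Fin m ⊕ (Fin m ⊕ Fin m) → ℂ) :=
    { toFun := fun p => vec3 ((1 / (2 * (β : ℂ))) • (p.2 + Mc⁻¹ *ᵥ (Kc *ᵥ p.1))) p.1 p.2
      map_add' := by
        intro p q
        rw [← _root_.vec3_add]
        congr 1
        simp only [Prod.fst_add, Prod.snd_add, mulVec_add, ← smul_add]
        congr 1
        abel
      map_smul' := by
        intro c p
        simp only [Prod.smul_fst, Prod.smul_snd, RingHom.id_apply]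
        rw [← _root_.vec3_smul]
        congr 1
        simp only [mulVec_smul, ← smul_add]
        rw [smul_comm] }
  refine ⟨LinearMap.range f, ?_, ?_, ?_⟩
  · ext w
    simp only [SetLike.mem_coe, LinearMap.mem_range, Set.mem_setOf_eq]
    constructor
    · rintro ⟨p, rfl⟩; exact ⟨p.1, p.2, rfl⟩
    · rintro ⟨y, z, rfl⟩; exact ⟨(y, z), rfl⟩
  · have hinj : Function.Injective f := by
      intro p q h
      have h1 : p.1 = q.1 := funext fun i => congrFun h (Sum.inr (Sum.inl i))
      have h2 : p.2 = q.2 := funext fun i => congrFun h (Sum.inr (Sum.inr i))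
      exact Prod.ext h1 h2
    rw [LinearMap.finrank_range_of_inj hinj, Module.finrank_prod, Module.finrank_pi]
    simp [two_mul]
  · rintro w ⟨⟨y, z⟩, rfl⟩
    have hAP : A *ᵥ f (y, z) = P *ᵥ f (y, z) := by
      show A *ᵥ vec3 _ y z = P *ᵥ vec3 _ y z
      rw [hA, hP, blk3_mulVec, blk3_mulVec]
      have hx : ((2 * (β : ℂ)) • Mc) *ᵥ ((1 / (2 * (β : ℂ))) • (z + Mc⁻¹ *ᵥ (Kc *ᵥ y)))
            + (0 : Matrix (Fin m) (Fin m) ℂ) *ᵥ y + (-Mc) *ᵥ z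
          = (0 : Matrix (Fin m) (Fin m) ℂ) *ᵥ ((1 / (2 * (β : ℂ))) • (z + Mc⁻¹ *ᵥ (Kc *ᵥ y)))
            + Kc *ᵥ y + (0 : Matrix (Fin m) (Fin m) ℂ) *ᵥ z := by
        rw [smul_mulVec, mulVec_smul, smul_smul, mul_one_div_cancel hb, one_smul,
          zero_mulVec, zero_mulVec, zero_mulVec, mulVec_add, Matrix.mulVec_mulVec, hMi',
          Matrix.one_mulVec, neg_mulVec]
        abel
      rw [hx]
    rw [← Matrix.mulVec_mulVec, hAP, Matrix.mulVec_mulVec, hPinv, hQP, Matrix.one_mulVec]
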